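/- arXiv:math/0508305 — 2 statements merged into one kernel-verified Lean document; each statement's English description precedes it below -/
import Mathlib

section
/- Let F(n) be the free group on generators g_1,…,g_n with n ≥ 2, let H = ⟨g_1⟩, and let S_0 ⊆ F(n) be the set of reduced words of the form g_1^m w g_1^k where w is nonempty, starts with a nonzero power of some g_j with j ≥ 2, does not start or end with a power of g_1, and |m| ≤ 2N_0 − 1 (for a fixed N_0 ≥ 1). Then the sets g_1^{4N_0 k} S_0 g_1^{-4N_0 k}, for k ranging over ℤ, are pairwise disjoint subsets of F(n). -/
def startsWithGen {n : ℕ} (j : Fin n) (w : FreeGroup (Fin n)) : Prop :=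
  ∃ b : Bool, w.toWord.head? = some (j, b)

def endsWithGen {n : ℕ} (j : Fin n) (w : FreeGroup (Fin n)) : Prop :=
  ∃ b : Bool, w.toWord.getLast? = some (j, b)

/-!
If the reduced word of `w` neither starts nor ends with a letter `g₁^{±1}`, then the reduced word
of `g₁^m w g₁^k` is the concatenation of the words of `g₁^m`, `w` and `g₁^k`, so the leading
exponent `m` is determined by the element. Conjugation by `g₁^{4N₀k}` shifts it by `4N₀k`, and the
windows `|m - 4N₀k| ≤ 2N₀ - 1` for distinct `k` are disjoint.
-/

namespace FreeGroup

variable {α : Type*}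

theorem isReduced_append {L₁ L₂ : List (α × Bool)} (h₁ : IsReduced L₁) (h₂ : IsReduced L₂)
    (h : ∀ x ∈ L₁.getLast?, ∀ y ∈ L₂.head?, x.1 ≠ y.1) : IsReduced (L₁ ++ L₂) :=
  List.isChain_append.2 ⟨h₁, h₂, fun x hx y hy hxy => absurd hxy (h x hx y hy)⟩

variable [DecidableEq α]

theorem toWord_of_zpow (a : α) (p : ℤ) :
    (of a ^ p).toWord = List.replicate p.natAbs (a, decide (0 ≤ p)) := by
  obtain ⟨n, rfl | rfl⟩ := Int.eq_nat_or_neg p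
  · simp [toWord_of_pow]
  · cases n with
    | zero => simp
    | succ n =>
      rw [zpow_neg, zpow_natCast, toWord_inv, toWord_of_pow, invRev, List.map_replicate,
        List.reverse_replicate, Int.natAbs_neg, Int.natAbs_natCast, decide_eq_false (by omega)]
      rfl

theorem fst_eq_of_mem_toWord_of_zpow {a : α} {p : ℤ} {l : α × Bool}
    (hl : l ∈ (of a ^ p).toWord) : l.1 = a := by
  rw [toWord_of_zpow] at hl
  rw [List.eq_of_mem_replicate hl]

theorem toWord_mul_of_getLast?_fst_ne {x y : FreeGroup α}
    (h : ∀ l ∈ x.toWord.getLast?, ∀ l' ∈ y.toWord.head?, l.1 ≠ l'.1) :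
    (x * y).toWord = x.toWord ++ y.toWord := by
  rw [toWord_mul]
  exact (isReduced_append isReduced_toWord isReduced_toWord h).reduce_eq

theorem toWord_zpow_mul_mul_zpow (a : α) (p q : ℤ) {w : FreeGroup α} (hw : w ≠ 1)
    (hhead : ∀ l ∈ w.toWord.head?, l.1 ≠ a) (hlast : ∀ l ∈ w.toWord.getLast?, l.1 ≠ a) :
    (of a ^ p * w * of a ^ q).toWord = (of a ^ p).toWord ++ w.toWord ++ (of a ^ q).toWord := by
  have hw' : w.toWord ≠ [] := mt toWord_eq_nil_iff.1 hw
  have hleft : (of a ^ p * w).toWord = (of a ^ p).toWord ++ w.toWord :=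
    toWord_mul_of_getLast?_fst_ne fun l hl l' hl' => by
      rw [fst_eq_of_mem_toWord_of_zpow (List.mem_of_mem_getLast? hl)]
      exact (hhead l' hl').symm
  rw [toWord_mul_of_getLast?_fst_ne, hleft]
  intro l hl l' hl'
  rw [hleft, List.getLast?_append_of_ne_nil _ hw'] at hl
  rw [fst_eq_of_mem_toWord_of_zpow (List.mem_of_mem_head? hl')]
  exact hlast l hl

theorem zpow_eq_of_zpow_mul_mul_zpow_eq (a : α) {p q p' q' : ℤ} {w w' : FreeGroup α}
    (hw : w ≠ 1) (hhead : ∀ l ∈ w.toWord.head?, l.1 ≠ a)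
    (hlast : ∀ l ∈ w.toWord.getLast?, l.1 ≠ a) (hhead' : ∀ l ∈ w'.toWord.head?, l.1 ≠ a)
    (h : of a ^ p * w * of a ^ q = of a ^ p' * w' * of a ^ q') : p = p' := by
  have hw' : of a ^ (p - p') * w * of a ^ (q - q') = w' := by
    rw [zpow_sub, zpow_sub]
    calc _ = (of a ^ p')⁻¹ * (of a ^ p * w * of a ^ q) * (of a ^ q')⁻¹ := by group
      _ = w' := by rw [h]; group
  by_contra hne
  have hlen : (p - p').natAbs ≠ 0 := by omega
  refine hhead' (a, decide (0 ≤ p - p')) ?_ rfl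
  rw [← hw', toWord_zpow_mul_mul_zpow a _ _ hw hhead hlast, toWord_of_zpow, List.append_assoc,
    List.head?_append_of_ne_nil _ (by simpa using hlen), List.head?_replicate, if_neg hlen]
  rfl

end FreeGroup

theorem Int.eq_of_mul_add_eq_mul_add {c k₁ k₂ m₁ m₂ : ℤ} (h : c * k₁ + m₁ = c * k₂ + m₂)
    (hm : |m₁ - m₂| < c) : k₁ = k₂ := by
  have hdvd : c ∣ m₁ - m₂ := ⟨k₂ - k₁, by rw [mul_sub]; linarith⟩
  have hm₁₂ := Int.eq_zero_of_abs_lt_dvd hdvd hm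
  exact mul_left_cancel₀ ((abs_nonneg _).trans_lt hm).ne' (by linarith)

theorem forall_mem_head?_fst_ne_of_not_startsWithGen {n : ℕ} {j : Fin n} {w : FreeGroup (Fin n)}
    (h : ¬ startsWithGen j w) : ∀ l ∈ w.toWord.head?, l.1 ≠ j := by
  rintro ⟨_, b⟩ hl rfl
  exact h ⟨b, hl⟩

theorem forall_mem_getLast?_fst_ne_of_not_endsWithGen {n : ℕ} {j : Fin n}
    {w : FreeGroup (Fin n)} (h : ¬ endsWithGen j w) : ∀ l ∈ w.toWord.getLast?, l.1 ≠ j := by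
  rintro ⟨_, b⟩ hl rfl
  exact h ⟨b, hl⟩

/-- in F(n), n ≥ 2, with S₀ the set of reduced words g₁^m w g₁^k
where w is nonempty, starts with a nonzero power of some g_j (j ≥ 2), neither
starts nor ends with a power of g₁, and |m| ≤ 2N₀ - 1, the conjugate sets
g₁^{4N₀k} S₀ g₁^{-4N₀k}, k ∈ ℤ, are pairwise disjoint. -/
theorem stmt_1 (n : ℕ) (hn : 2 ≤ n) (N0 : ℕ) :
    ∀ k1 k2 : ℤ, k1 ≠ k2 →
      Disjoint
        ((fun x => (FreeGroup.of (⟨0, by omega⟩ : Fin n)) ^ (4 * (N0 : ℤ) * k1) * x *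
            (FreeGroup.of (⟨0, by omega⟩ : Fin n)) ^ (-(4 * (N0 : ℤ) * k1))) ''
          {x : FreeGroup (Fin n) | ∃ (m k : ℤ) (w : FreeGroup (Fin n)),
            x = (FreeGroup.of (⟨0, by omega⟩ : Fin n)) ^ m * w *
                (FreeGroup.of (⟨0, by omega⟩ : Fin n)) ^ k ∧
            w ≠ 1 ∧ ¬ startsWithGen (⟨0, by omega⟩ : Fin n) w ∧
            ¬ endsWithGen (⟨0, by omega⟩ : Fin n) w ∧ |m| ≤ 2 * (N0 : ℤ) - 1})
        ((fun x => (FreeGroup.of (⟨0, by omega⟩ : Fin n)) ^ (4 * (N0 : ℤ) * k2) * x *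
            (FreeGroup.of (⟨0, by omega⟩ : Fin n)) ^ (-(4 * (N0 : ℤ) * k2))) ''
          {x : FreeGroup (Fin n) | ∃ (m k : ℤ) (w : FreeGroup (Fin n)),
            x = (FreeGroup.of (⟨0, by omega⟩ : Fin n)) ^ m * w *
                (FreeGroup.of (⟨0, by omega⟩ : Fin n)) ^ k ∧
            w ≠ 1 ∧ ¬ startsWithGen (⟨0, by omega⟩ : Fin n) w ∧
            ¬ endsWithGen (⟨0, by omega⟩ : Fin n) w ∧ |m| ≤ 2 * (N0 : ℤ) - 1}) := by
  intro k1 k2 hk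
  rw [Set.disjoint_left]
  rintro _ ⟨_, ⟨m1, q1, w1, rfl, hw1, hs1, he1, hm1⟩, rfl⟩ ⟨_, ⟨m2, q2, w2, rfl, -, hs2, -, hm2⟩, h⟩
  have conj : ∀ {G : Type} [Group G] (g w : G) (s m q : ℤ),
      g ^ s * (g ^ m * w * g ^ q) * g ^ (-s) = g ^ (s + m) * w * g ^ (q - s) := by
    intro G _ g w s m q
    rw [zpow_add, zpow_sub, zpow_neg]
    group
  dsimp only at h
  rw [conj, conj] at h
  have hexp : 4 * (N0 : ℤ) * k1 + m1 = 4 * N0 * k2 + m2 := FreeGroup.zpow_eq_of_zpow_mul_mul_zpow_eq _ hw1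
    (forall_mem_head?_fst_ne_of_not_startsWithGen hs1)
    (forall_mem_getLast?_fst_ne_of_not_endsWithGen he1)
    (forall_mem_head?_fst_ne_of_not_startsWithGen hs2) h.symm
  refine hk (Int.eq_of_mul_add_eq_mul_add hexp ?_)
  rw [abs_lt]
  constructor <;> linarith [abs_le.mp hm1, abs_le.mp hm2]
end

section
/- Let G = F(n_1) × ⋯ × F(n_N) with n_i ≥ 2, H = ⟨g_{1,1}⟩ × ⋯ × ⟨g_{N,1}⟩, and G_i as above. For any g ∈ G not lying in ⋃_{i=1}^N G_i, the subgroups g H g^{-1} and H intersect trivially; equivalently, for all h, h' ∈ H, g h g^{-1} = h' implies h = h' = e. -/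
/-- H = ⟨g_{1,1}⟩ × ⋯ × ⟨g_{N,1}⟩ inside G = F(n_1) × ⋯ × F(n_N). -/
def Hset (N : ℕ) (n : Fin N → ℕ) (hn : ∀ i, 2 ≤ n i) :
    Set (∀ i, FreeGroup (Fin (n i))) :=
  {w | ∀ i, ∃ m : ℤ,
    w i = (FreeGroup.of (⟨0, by have := hn i; omega⟩ : Fin (n i))) ^ m}

/-- G_i: the i-th free factor replaced by ⟨g_{i,1}⟩. -/
def Giset (N : ℕ) (n : Fin N → ℕ) (hn : ∀ i, 2 ≤ n i) (i : Fin N) :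
    Set (∀ j, FreeGroup (Fin (n j))) :=
  {w | ∃ m : ℤ,
    w i = (FreeGroup.of (⟨0, by have := hn i; omega⟩ : Fin (n i))) ^ m}

/-!
Work coordinatewise in a free group `F` with basis element `a`. Exponent sum is a homomorphism to
`ℤ`, so `g a^m g⁻¹ = a^k` forces `m = k`, and then `g` commutes with `a^m`. If `m ≠ 0`, a
length-reduction argument on reduced words shows that the centralizer of `a^m` is `⟨a⟩`: strip a
leading or trailing `a⁻¹` from `g`; once there is none, `g·a^m` and `a^m·g` are both reduced as
written, so the word of `g` commutes with `a^m` letterwise and must be a power of `a`. Hence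
`g ∉ ⟨a⟩` forces `m = 0`.
-/

theorem List.eq_replicate_of_append_replicate_comm {β : Type*} {c : β} {L : List β} {m : ℕ}
    (hm : m ≠ 0) (h : L ++ replicate m c = replicate m c ++ L) :
    L = replicate L.length c := by
  have hpow : ∀ k, L ++ replicate (m * k) c = replicate (m * k) c ++ L := by
    intro k
    induction k with
    | zero => simp
    | succ k ih =>
      rw [Nat.mul_succ, replicate_add, ← append_assoc, ih, append_assoc, h, append_assoc]
  have hlen : L.length ≤ (replicate (m * L.length) c).length := by
    simpa using Nat.le_mul_of_pos_left _ (Nat.pos_of_ne_zero hm)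
  calc L = take L.length (L ++ replicate (m * L.length) c) := by simp
    _ = replicate L.length c := by
      rw [hpow, take_append_of_le_length hlen, take_replicate, min_eq_left (by simpa using hlen)]

namespace FreeGroup

variable {α : Type*}

theorem eq_of_conj_zpow_of_eq_zpow_of (a : α) (g : FreeGroup α) {m k : ℤ}
    (h : g * of a ^ m * g⁻¹ = of a ^ k) : m = k := by
  simpa [← ofAdd_zsmul] using congrArg (lift fun _ => Multiplicative.ofAdd (1 : ℤ)) h

theorem isReduced_append_replicate {L : List (α × Bool)} (hL : IsReduced L) {a : α} {b : Bool}
    (hlast : (a, !b) ∉ L.getLast?) (m : ℕ) : IsReduced (L ++ List.replicate m (a, b)) := by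
  refine List.isChain_append.2 ⟨hL, List.isChain_replicate_of_rel _ fun _ => rfl, ?_⟩
  rintro ⟨a', b'⟩ hx y hy rfl
  obtain rfl := List.eq_of_mem_replicate (List.mem_of_mem_head? hy)
  by_contra hne
  obtain rfl : b' = !b := Bool.eq_not.2 hne
  exact hlast hx

theorem isReduced_replicate_append {L : List (α × Bool)} (hL : IsReduced L) {a : α} {b : Bool}
    (hhead : (a, !b) ∉ L.head?) (m : ℕ) : IsReduced (List.replicate m (a, b) ++ L) := by
  refine List.isChain_append.2 ⟨List.isChain_replicate_of_rel _ fun _ => rfl, hL, ?_⟩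
  rintro x hx ⟨a', b'⟩ hy rfl
  obtain rfl := List.eq_of_mem_replicate (List.mem_of_mem_getLast? hx)
  by_contra hne
  obtain rfl : b' = !b := Bool.eq_not.2 (Ne.symm hne)
  exact hhead hy

theorem mk_singleton_inv (a : α) : mk [(a, false)] = (of a)⁻¹ := by
  rw [of, inv_mk]
  rfl

section DecidableEq

variable [DecidableEq α]

theorem norm_of_mul_lt_of_toWord_eq_cons {a : α} {x : FreeGroup α} {T : List (α × Bool)}
    (h : x.toWord = (a, false) :: T) : norm (of a * x) < norm x := by
  have : of a * x = mk T := by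
    rw [← mk_toWord (x := x), h, ← List.singleton_append, ← mul_mk, mk_singleton_inv,
      mul_inv_cancel_left]
  rw [this, show norm x = x.toWord.length from rfl, h, List.length_cons]
  exact Nat.lt_succ_of_le norm_mk_le

theorem norm_mul_of_lt_of_toWord_eq_append {a : α} {x : FreeGroup α} {T : List (α × Bool)}
    (h : x.toWord = T ++ [(a, false)]) : norm (x * of a) < norm x := by
  have : x * of a = mk T := by
    rw [← mk_toWord (x := x), h, ← mul_mk, mk_singleton_inv, inv_mul_cancel_right]
  rw [this, show norm x = x.toWord.length from rfl, h, List.length_append, List.length_singleton]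
  exact Nat.lt_succ_of_le norm_mk_le

theorem mem_zpowers_of_commute_pow (a : α) {m : ℕ} (hm : m ≠ 0) (x : FreeGroup α)
    (hx : Commute x (of a ^ m)) : x ∈ Subgroup.zpowers (of a) := by
  by_cases hhead : (a, false) ∈ x.toWord.head?
  · obtain ⟨T, hT⟩ := List.head?_eq_some_iff.1 hhead
    -- `hlt` discharges the termination obligation of the recursive call
    have hlt := norm_of_mul_lt_of_toWord_eq_cons hT
    have := mem_zpowers_of_commute_pow a hm (of a * x) (((Commute.refl _).pow_right m).mul_left hx)
    simpa using (Subgroup.zpowers (of a)).mul_mem (Subgroup.inv_mem _ (Subgroup.mem_zpowers _)) this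
  by_cases hlast : (a, false) ∈ x.toWord.getLast?
  · obtain ⟨T, hT⟩ := List.getLast?_eq_some_iff.1 hlast
    have hlt := norm_mul_of_lt_of_toWord_eq_append hT
    have := mem_zpowers_of_commute_pow a hm (x * of a) (hx.mul_left ((Commute.refl _).pow_right m))
    simpa using (Subgroup.zpowers (of a)).mul_mem this (Subgroup.inv_mem _ (Subgroup.mem_zpowers _))
  have hword : x.toWord ++ List.replicate m (a, true) = List.replicate m (a, true) ++ x.toWord := by
    rw [← (isReduced_append_replicate isReduced_toWord hlast m).reduce_eq,
      ← (isReduced_replicate_append isReduced_toWord hhead m).reduce_eq,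
      ← toWord_of_pow, ← toWord_mul, ← toWord_mul, hx.eq]
  refine Subgroup.mem_zpowers_iff.2 ⟨x.toWord.length, toWord_injective ?_⟩
  rw [zpow_natCast, toWord_of_pow, ← List.eq_replicate_of_append_replicate_comm hm hword]
termination_by norm x

theorem mem_zpowers_of_commute_zpow (a : α) {m : ℤ} (hm : m ≠ 0) {x : FreeGroup α}
    (hx : Commute x (of a ^ m)) : x ∈ Subgroup.zpowers (of a) := by
  have hm' : m.natAbs ≠ 0 := Int.natAbs_ne_zero.2 hm
  rcases m.natAbs_eq with h | h <;> rw [h] at hx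
  · rw [zpow_natCast] at hx
    exact mem_zpowers_of_commute_pow a hm' x hx
  · rw [zpow_neg, zpow_natCast, Commute.inv_right_iff] at hx
    exact mem_zpowers_of_commute_pow a hm' x hx

theorem eq_one_of_mem_zpowers_of_conj_mem_zpowers {a : α} {g h : FreeGroup α}
    (hg : g ∉ Subgroup.zpowers (of a)) (hh : h ∈ Subgroup.zpowers (of a))
    (hconj : g * h * g⁻¹ ∈ Subgroup.zpowers (of a)) : h = 1 := by
  obtain ⟨m, rfl⟩ := Subgroup.mem_zpowers_iff.1 hh
  obtain ⟨k, hk⟩ := Subgroup.mem_zpowers_iff.1 hconj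
  obtain rfl := eq_of_conj_zpow_of_eq_zpow_of a g hk.symm
  by_cases hm : m = 0
  · rw [hm, zpow_zero]
  · exact absurd (mem_zpowers_of_commute_zpow a hm (mul_inv_eq_iff_eq_mul.1 hk.symm)) hg

end DecidableEq

end FreeGroup

/-- if g ∈ G = F(n_1) × ⋯ × F(n_N) does not lie in ⋃ᵢ Gᵢ, then
gHg⁻¹ ∩ H = {e}: for all h, h' ∈ H, g h g⁻¹ = h' implies h = h' = e. -/
theorem stmt_7 (N : ℕ) (n : Fin N → ℕ) (hn : ∀ i, 2 ≤ n i)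
    (g : ∀ i, FreeGroup (Fin (n i))) (hg : ∀ i, g ∉ Giset N n hn i) :
    ∀ h ∈ Hset N n hn, ∀ h' ∈ Hset N n hn,
      g * h * g⁻¹ = h' → h = 1 ∧ h' = 1 := by
  intro h hh h' hh' hconj
  have h_one : h = 1 := funext fun i => by
    obtain ⟨m, hm⟩ := hh i
    obtain ⟨k, hk⟩ := hh' i
    have hgi : g i ∉ Subgroup.zpowers (FreeGroup.of _) := fun ⟨j, hj⟩ => hg i ⟨j, hj.symm⟩
    have hconj_i : g i * h i * (g i)⁻¹ = h' i := congrFun hconj i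
    exact FreeGroup.eq_one_of_mem_zpowers_of_conj_mem_zpowers hgi ⟨m, hm.symm⟩
      (hconj_i ▸ ⟨k, hk.symm⟩)
  exact ⟨h_one, by rw [← hconj, h_one, mul_one, mul_inv_cancel]⟩
end
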